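/- (Lemma 4 of the appendix) Assume N ≥ 3, let T be an N×N complex Hermitian matrix with T_{N−1,N−1} = 1, and let q ∈ ℂ and k, l ∈ ℝ satisfy the matrix equations J₊·T + k·(J₋·T) + l·(T·J₊) = (conj q)·T and T·J₋ + l·(J₋·T) + k·(T·J₊) = q·T. If k ≠ 0 and q = 0, then l = 0. -/

import Mathlib

open Matrix

/-- Ladder coefficients c_a = √((N−1−a)(a+1)), so that c_{N−1} = 0. -/
noncomputable def spinC (N a : ℕ) : ℝ :=
  Real.sqrt (((N : ℝ) - 1 - a) * (a + 1))

/-- Raising operator J₊: (J₊)_{a+1,a} = c_a, all other entries 0. -/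
noncomputable def Jp (N : ℕ) : Matrix (Fin N) (Fin N) ℂ :=
  Matrix.of fun a b => if (a : ℕ) = (b : ℕ) + 1 then ((spinC N b : ℝ) : ℂ) else 0

/-- Lowering operator J₋ = J₊ᵀ. -/
noncomputable def Jm (N : ℕ) : Matrix (Fin N) (Fin N) ℂ := (Jp N)ᵀ

/-- J_z = diag(a − (N−1)/2). -/
noncomputable def Jz (N : ℕ) : Matrix (Fin N) (Fin N) ℂ :=
  Matrix.diagonal fun a => ((a : ℂ) - ((N : ℂ) - 1) / 2)

/-- J_x = (J₊ + J₋)/2. -/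
noncomputable def Jx (N : ℕ) : Matrix (Fin N) (Fin N) ℂ :=
  (1 / 2 : ℂ) • (Jp N + Jm N)

/-- J_y = (J₊ − J₋)/(2i). -/
noncomputable def Jy (N : ℕ) : Matrix (Fin N) (Fin N) ℂ :=
  (1 / (2 * Complex.I)) • (Jp N - Jm N)

/-! Write `N = n + 3`, so that the corner indices are `n, n + 1, n + 2`, and let `p = c_{n+1}`,
`r = c_n`, `τ = T_{n+1,n+1}`, `x = T_{n,n+2}`, `σ = (J₊T)_{n,n+1}`. With `q = 0`, the entries
`(n+2, n+1)`, `(n+1, n+2)`, `(n, n+1)` of (j1) read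
  (A) `p τ + l p = 0`,  (B) `r x + k p = 0`,  (C) `σ + k r τ + l p x = 0`.
As `T` is Hermitian, the conjugate transpose of (j1) is again an equation in `T`; multiplying it on
the left by `J₊` and using `J₊ J₋ = diag(a (N - a))`, its `(n, n+2)` entry gives
  (D) `p σ + 3 n l x = 0`,
also when `n = 0`. Eliminating `τ`, `x`, `σ` leaves `k l p (p² + r² - 3 n) = 0`, and
`p² + r² - 3 n = (n + 2) + 2 (n + 1) - 3 n = 4`. -/

section Ladder

variable {N : ℕ}

lemma spinC_sq {a : ℕ} (h : a + 1 ≤ N) : spinC N a ^ 2 = ((N : ℝ) - 1 - a) * (a + 1) := by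
  have : (a : ℝ) + 1 ≤ N := by exact_mod_cast h
  exact Real.sq_sqrt (by nlinarith)

lemma Jp_apply (a b : Fin N) :
    Jp N a b = if (a : ℕ) = (b : ℕ) + 1 then (spinC N b : ℂ) else 0 := rfl

lemma conjTranspose_Jp : (Jp N)ᴴ = Jm N := by
  ext a b
  rw [conjTranspose_apply, Jm, transpose_apply, Jp_apply]
  split_ifs <;> simp

lemma conjTranspose_Jm : (Jm N)ᴴ = Jp N := by
  rw [← conjTranspose_Jp, conjTranspose_conjTranspose]

lemma Jp_mul_apply (X : Matrix (Fin N) (Fin N) ℂ) {a c : Fin N} (h : (a : ℕ) = c + 1)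
    (b : Fin N) :
    (Jp N * X) a b = spinC N c * X c b := by
  rw [mul_apply, Finset.sum_eq_single c]
  · simp [Jp_apply, h]
  · intro d _ hd
    rw [Jp_apply, if_neg (fun h' => hd (Fin.ext (by omega))), zero_mul]
  · simp

lemma mul_Jp_apply (X : Matrix (Fin N) (Fin N) ℂ) (a : Fin N) {b c : Fin N}
    (h : (c : ℕ) = b + 1) :
    (X * Jp N) a b = spinC N b * X a c := by
  rw [mul_apply, Finset.sum_eq_single c]
  · simp [Jp_apply, h, mul_comm]
  · intro d _ hd
    rw [Jp_apply, if_neg (fun h' => hd (Fin.ext (by omega))), mul_zero]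
  · simp

lemma mul_Jp_apply_of_val_add_one_eq (X : Matrix (Fin N) (Fin N) ℂ) (a : Fin N) {b : Fin N}
    (h : (b : ℕ) + 1 = N) : (X * Jp N) a b = 0 := by
  rw [mul_apply]
  refine Finset.sum_eq_zero fun d _ => ?_
  rw [Jp_apply, if_neg (by omega), mul_zero]

lemma Jm_mul_apply (X : Matrix (Fin N) (Fin N) ℂ) {a c : Fin N} (h : (c : ℕ) = a + 1)
    (b : Fin N) :
    (Jm N * X) a b = spinC N a * X c b := by
  rw [← transpose_apply (Jm N * X), transpose_mul, Jm, transpose_transpose,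
    mul_Jp_apply _ _ h, transpose_apply]

lemma Jm_mul_apply_of_val_add_one_eq (X : Matrix (Fin N) (Fin N) ℂ) {a : Fin N}
    (h : (a : ℕ) + 1 = N) (b : Fin N) : (Jm N * X) a b = 0 := by
  rw [← transpose_apply (Jm N * X), transpose_mul, Jm, transpose_transpose,
    mul_Jp_apply_of_val_add_one_eq _ _ h]

lemma mul_Jm_apply (X : Matrix (Fin N) (Fin N) ℂ) (a : Fin N) {b c : Fin N}
    (h : (b : ℕ) = c + 1) :
    (X * Jm N) a b = spinC N c * X a c := by
  rw [← transpose_apply (X * Jm N), transpose_mul, Jm, transpose_transpose,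
    Jp_mul_apply _ h, transpose_apply]

lemma Jp_mul_Jm : Jp N * Jm N = diagonal fun a : Fin N => ((a : ℂ) * (N - a)) := by
  ext a b
  by_cases ha : (a : ℕ) = 0
  · rw [mul_apply, Finset.sum_eq_zero fun d _ => by rw [Jp_apply, if_neg (by omega), zero_mul]]
    simp [diagonal_apply, ha]
  · have hc : (a : ℕ) = (⟨a - 1, by omega⟩ : Fin N) + 1 := by simp; omega
    rw [Jp_mul_apply _ hc, Jm, transpose_apply, Jp_apply, diagonal_apply]
    by_cases hab : a = b
    · subst hab
      rw [if_pos hc, if_pos rfl, ← Complex.ofReal_mul, ← sq, spinC_sq (by simp; omega)]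
      push_cast [Nat.cast_sub (by omega : 1 ≤ (a : ℕ))]
      ring
    · rw [if_neg fun h => hab (Fin.ext (by omega)), if_neg hab, mul_zero]

lemma mul_Jm_add_eq_zero_of_isHermitian {T : Matrix (Fin N) (Fin N) ℂ} (hT : T.IsHermitian)
    {k l : ℝ}
    (h : Jp N * T + (k : ℂ) • (Jm N * T) + (l : ℂ) • (T * Jp N) = 0) :
    T * Jm N + (k : ℂ) • (T * Jp N) + (l : ℂ) • (Jm N * T) = 0 := by
  simpa [conjTranspose_mul, hT.eq, conjTranspose_Jp, conjTranspose_Jm] using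
    congrArg conjTranspose h

end Ladder

lemma apply_eq_zero_of_add_smul_add_smul_eq_zero {m n R : Type*} [Semiring R]
    {A B C : Matrix m n R} {x y : R}
    (h : A + x • B + y • C = 0) (a : m) (b : n) : A a b + x * B a b + y * C a b = 0 := by
  simpa using congrFun (congrFun h a) b

theorem mul_eq_zero_of_Jp_mul_add_eq_zero {n : ℕ} {T : Matrix (Fin (n + 3)) (Fin (n + 3)) ℂ}
    (hT : T.IsHermitian) (hT1 : T (Fin.last _) (Fin.last _) = 1) {k l : ℝ}
    (h : Jp _ * T + (k : ℂ) • (Jm _ * T) + (l : ℂ) • (T * Jp _) = 0) : k * l = 0 := by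
  set i₀ : Fin (n + 3) := ⟨n, by omega⟩
  set i₁ : Fin (n + 3) := ⟨n + 1, by omega⟩
  set p := spinC (n + 3) (n + 1)
  set r := spinC (n + 3) n
  have hE := apply_eq_zero_of_add_smul_add_smul_eq_zero h
  have hA := hE (Fin.last _) i₁
  rw [Jp_mul_apply _ (c := i₁) rfl, Jm_mul_apply_of_val_add_one_eq _ rfl,
    mul_Jp_apply _ _ (c := Fin.last _) rfl, hT1] at hA
  have hB := hE i₁ (Fin.last _)
  rw [Jp_mul_apply _ (c := i₀) rfl, Jm_mul_apply _ (c := Fin.last _) rfl,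
    mul_Jp_apply_of_val_add_one_eq _ _ rfl, hT1] at hB
  have hC := hE i₀ i₁
  rw [Jm_mul_apply _ (c := i₁) rfl, mul_Jp_apply _ _ (c := Fin.last _) rfl] at hC
  have hJpDual := congrArg (Jp _ * ·) (mul_Jm_add_eq_zero_of_isHermitian hT h)
  simp only [mul_add, mul_smul_comm, ← mul_assoc, Jp_mul_Jm, mul_zero] at hJpDual
  have hD := apply_eq_zero_of_add_smul_add_smul_eq_zero hJpDual i₀ (Fin.last _)
  rw [mul_Jm_apply _ _ (c := i₁) rfl, mul_Jp_apply_of_val_add_one_eq _ _ rfl,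
    diagonal_mul] at hD
  push_cast at hD
  have hp : (p : ℂ) ^ 2 = n + 2 := by
    rw [← Complex.ofReal_pow, spinC_sq (by omega)]; push_cast; ring
  have hr : (r : ℂ) ^ 2 = 2 * (n + 1) := by
    rw [← Complex.ofReal_pow, spinC_sq (by omega)]; push_cast; ring
  have key : ((k * l * p : ℝ) : ℂ) * 4 = 0 := by
    push_cast
    linear_combination -(r * (p * hC - hD - k * r * hA) - l * (p ^ 2 - 3 * n) * hB) -
      k * l * p * (hp + hr)
  have hp0 : p ≠ 0 := fun h0 => by simp [h0] at hp; norm_cast at hp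
  simpa [hp0] using key

/-- Lemma 4: if k ≠ 0 and q = 0 then l = 0. -/
theorem lemma4_q_zero_imp_l_zero (N : ℕ) (hN : 3 ≤ N)
    (T : Matrix (Fin N) (Fin N) ℂ) (hT : T.IsHermitian)
    (hT1 : T ⟨N - 1, by omega⟩ ⟨N - 1, by omega⟩ = 1)
    (q : ℂ) (k l : ℝ)
    (heq1 : Jp N * T + (k : ℂ) • (Jm N * T) + (l : ℂ) • (T * Jp N)
      = (starRingEnd ℂ q) • T)
    (hk : k ≠ 0) (hq : q = 0) :
    l = 0 := by
  subst hq
  obtain ⟨n, rfl⟩ : ∃ n, N = n + 3 := ⟨N - 3, by omega⟩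
  rw [map_zero, zero_smul] at heq1
  exact (mul_eq_zero.1 (mul_eq_zero_of_Jp_mul_add_eq_zero hT hT1 heq1)).resolve_left hk
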